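/- arXiv:2405.00559 — 2 statements merged into one kernel-verified Lean document; each statement's English description precedes it below -/
import Mathlib

section
/- Positive renormalisation (relative energy version): under the same discrete mass balance, (|K|/δt)(Π_γ(ρ_K^{n+1}|ρ̃_K) − Π_γ(ρ_K^n|ρ̃_K)) + h_γ'(ρ_K^{n+1}) Σ_σ F_{σ,K} + R_K = h_γ'(ρ̃_K) Σ_σ F_{σ,K}, with R_K ≥ 0 the same Bregman remainder. -/
/-- Helmholtz function h_γ(ρ) = ρ^γ/(γ−1). -/
noncomputable def hfun (γ : ℝ) : ℝ → ℝ := fun x => x ^ γ / (γ - 1)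

/-- Relative internal energy Π_γ(ρ|ρ̃) = h_γ(ρ) − h_γ(ρ̃) − h_γ'(ρ̃)(ρ − ρ̃). -/
noncomputable def Pg (γ ρ ρt : ℝ) : ℝ :=
  hfun γ ρ - hfun γ ρt - deriv (hfun γ) ρt * (ρ - ρt)

/-!
The identity is pure algebra: by definition of `Pg` the terms `h_γ(ρ̃)` cancel, and the mass
balance turns `h_γ'(ρ̃) (ρⁿ⁺¹ − ρⁿ)` into `−h_γ'(ρ̃) Σ F`. The remainder is `Pg γ ρⁿ ρⁿ⁺¹`, a
Bregman divergence of the convex function `h_γ`, hence nonnegative by the tangent-line inequality.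
-/

theorem ConvexOn.add_deriv_mul_sub_le {S : Set ℝ} {f : ℝ → ℝ} {x y : ℝ}
    (hf : ConvexOn ℝ S f) (hx : x ∈ S) (hy : y ∈ S) (hfy : DifferentiableAt ℝ f y) :
    f y + deriv f y * (x - y) ≤ f x := by
  rcases lt_trichotomy x y with hxy | rfl | hyx
  · have hslope := hf.slope_le_deriv hx hy hxy hfy
    rw [slope_def_field, div_le_iff₀ (sub_pos.2 hxy)] at hslope
    linarith
  · simp
  · have hslope := hf.deriv_le_slope hy hx hyx hfy
    rw [slope_def_field, le_div_iff₀ (sub_pos.2 hyx)] at hslope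
    linarith

theorem convexOn_hfun {γ : ℝ} (hγ : 1 < γ) : ConvexOn ℝ (Set.Ici 0) (hfun γ) := by
  have hsmul : hfun γ = fun x => (γ - 1)⁻¹ • x ^ γ := by
    funext x
    rw [hfun, smul_eq_mul, div_eq_inv_mul]
  rw [hsmul]
  exact (convexOn_rpow hγ.le).smul (inv_nonneg.2 (sub_pos.2 hγ).le)

theorem Pg_nonneg {γ ρ ρt : ℝ} (hγ : 1 < γ) (hρ : 0 ≤ ρ) (hρt : 0 < ρt) : 0 ≤ Pg γ ρ ρt := by
  have hdiff : DifferentiableAt ℝ (hfun γ) ρt :=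
    (Real.differentiableAt_rpow_const_of_ne γ hρt.ne').div_const _
  have htangent := (convexOn_hfun hγ).add_deriv_mul_sub_le (Set.mem_Ici.2 hρ) (Set.mem_Ici.2 hρt.le) hdiff
  unfold Pg
  linarith

theorem Pg_renormalisation (γ c ρn ρn1 ρt S : ℝ) (hmass : c * (ρn1 - ρn) + S = 0) :
    c * (Pg γ ρn1 ρt - Pg γ ρn ρt) + deriv (hfun γ) ρn1 * S + c * Pg γ ρn ρn1 =
      deriv (hfun γ) ρt * S := by
  obtain rfl : S = -(c * (ρn1 - ρn)) := by linarith
  unfold Pg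
  ring

theorem stmt13_general {ι : Type*} [Fintype ι] (γ volK δt ρn ρn1 ρtK : ℝ) (Fl : ι → ℝ)
    (hγ : 1 < γ) (hvol : 0 < volK) (hδt : 0 < δt)
    (hρn : 0 < ρn) (hρn1 : 0 < ρn1)
    (hmass : volK / δt * (ρn1 - ρn) + ∑ σ, Fl σ = 0) :
    volK / δt * (Pg γ ρn1 ρtK - Pg γ ρn ρtK) + deriv (hfun γ) ρn1 * ∑ σ, Fl σ +
        volK / δt * (hfun γ ρn - hfun γ ρn1 - deriv (hfun γ) ρn1 * (ρn - ρn1)) =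
      deriv (hfun γ) ρtK * ∑ σ, Fl σ ∧
      0 ≤ volK / δt * (hfun γ ρn - hfun γ ρn1 - deriv (hfun γ) ρn1 * (ρn - ρn1)) :=
  ⟨Pg_renormalisation γ _ ρn ρn1 ρtK _ hmass,
    mul_nonneg (div_pos hvol hδt).le (Pg_nonneg hγ hρn.le hρn1)⟩

/-- Positive renormalisation identity (relative energy version) with the same
nonnegative Bregman remainder. -/
theorem stmt13 {ι : Type*} [Fintype ι] (γ volK δt ρn ρn1 ρtK : ℝ) (Fl : ι → ℝ)
    (hγ : 1 < γ) (hvol : 0 < volK) (hδt : 0 < δt)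
    (hρn : 0 < ρn) (hρn1 : 0 < ρn1) (hρt : 0 < ρtK)
    (hmass : volK / δt * (ρn1 - ρn) + ∑ σ, Fl σ = 0) :
    volK / δt * (Pg γ ρn1 ρtK - Pg γ ρn ρtK) + deriv (hfun γ) ρn1 * ∑ σ, Fl σ +
        volK / δt * (hfun γ ρn - hfun γ ρn1 - deriv (hfun γ) ρn1 * (ρn - ρn1)) =
      deriv (hfun γ) ρtK * ∑ σ, Fl σ ∧
      0 ≤ volK / δt * (hfun γ ρn - hfun γ ρn1 - deriv (hfun γ) ρn1 * (ρn - ρn1)) :=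
  stmt13_general γ volK δt ρn ρn1 ρtK Fl hγ hvol hδt hρn hρn1 hmass
end

section
/- In the topological degree existence argument: if ρ^λ ∈ L_M(Ω) satisfies ρ_K^λ − ρ_K^n + (λδt/|K|) Σ_σ F_{σ,K}(ρ^λ, u^n) = 0 for all K, with λ ∈ [0,1], ρ^n > 0, antisymmetric fluxes, and zero exterior fluxes, then 0 ≤ ρ_K^λ ≤ |Ω| max_K ρ_K^n / min_K |K| for all K, provided ρ^λ ≥ 0. -/
/-!
Summing the homotopy equation against the cell measures, the conservative fluxes cancel, so the
total mass `∑ |K| ρ_K^λ` equals `∑ |K| ρ_K^n ≤ |Ω| max ρ^n`. When `ρ^λ ≥ 0` the mass of a single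
cell is at most the total mass, and dividing by `|K| ≥ min |L|` gives the bound.
-/

open Finset

section NetFlux

variable {ι F M : Type*} [Fintype ι] [Fintype F] [DecidableEq ι] [AddCommGroup M]

/-- The paper's `Σ_σ F_{σ,K}`, with `F_{σ, Kof σ} = flux σ = -F_{σ, Lof σ}`. -/
def netFlux (Kof Lof : F → ι) (flux : F → M) (K : ι) : M :=
  ∑ σ, if K = Kof σ then flux σ else if K = Lof σ then -flux σ else 0

lemma sum_ite_eq_ite_neg_eq_zero {a b : ι} (hab : a ≠ b) (x : M) :
    ∑ K, (if K = a then x else if K = b then -x else 0) = 0 := by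
  have hsplit : ∀ K, (if K = a then x else if K = b then -x else 0)
      = (if K = a then x else 0) + (if K = b then -x else 0) := by
    intro K
    by_cases ha : K = a
    · subst ha; simp [hab]
    · simp [ha]
  simp only [hsplit, sum_add_distrib, sum_ite_eq', mem_univ, if_true, add_neg_cancel]

lemma sum_netFlux_eq_zero {Kof Lof : F → ι} (hKL : ∀ σ, Kof σ ≠ Lof σ) (flux : F → M) :
    ∑ K, netFlux Kof Lof flux K = 0 := by
  unfold netFlux
  rw [sum_comm]
  exact sum_eq_zero fun σ _ => sum_ite_eq_ite_neg_eq_zero (hKL σ) (flux σ)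

end NetFlux

section Mass

variable {ι 𝕜 : Type*} [Fintype ι] [Field 𝕜] [LinearOrder 𝕜] [IsStrictOrderedRing 𝕜]

lemma sum_mul_eq_of_sub_add_div_mul_eq_zero {vol ρ ρ₀ S : ι → 𝕜} {c : 𝕜}
    (hvol : ∀ K, vol K ≠ 0) (hS : ∑ K, S K = 0)
    (heq : ∀ K, ρ K - ρ₀ K + c / vol K * S K = 0) :
    ∑ K, vol K * ρ K = ∑ K, vol K * ρ₀ K := by
  have hcell : ∀ K, vol K * ρ K = vol K * ρ₀ K - c * S K := by
    intro K
    have h := heq K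
    field_simp [hvol K] at h
    linear_combination h
  simp only [hcell, sum_sub_distrib, ← mul_sum, hS, mul_zero, sub_zero]

lemma sum_mul_le_sum_mul_sup' [Nonempty ι] {vol : ι → 𝕜} (hvol : ∀ K, 0 ≤ vol K) (ρ : ι → 𝕜) :
    ∑ K, vol K * ρ K ≤ (∑ K, vol K) * univ.sup' univ_nonempty ρ := by
  rw [sum_mul]
  exact sum_le_sum fun K _ => mul_le_mul_of_nonneg_left (le_sup' ρ (mem_univ K)) (hvol K)

lemma le_sum_mul_sup'_div_inf' [Nonempty ι] {vol ρ ρ₀ : ι → 𝕜} (hvol : ∀ K, 0 < vol K)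
    (hρ : ∀ K, 0 ≤ ρ K) (hmass : ∑ K, vol K * ρ K ≤ ∑ K, vol K * ρ₀ K) (K : ι) :
    ρ K ≤ (∑ L, vol L) * univ.sup' univ_nonempty ρ₀ / univ.inf' univ_nonempty vol := by
  obtain ⟨L, -, hL⟩ := exists_mem_eq_inf' univ_nonempty vol
  rw [le_div_iff₀ (hL ▸ hvol L)]
  calc ρ K * univ.inf' univ_nonempty vol
      ≤ vol K * ρ K := by
        rw [mul_comm]; exact mul_le_mul_of_nonneg_right (inf'_le vol (mem_univ K)) (hρ K)
    _ ≤ ∑ L, vol L * ρ L :=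
        single_le_sum (f := fun L => vol L * ρ L)
          (fun L _ => mul_nonneg (hvol L).le (hρ L)) (mem_univ K)
    _ ≤ ∑ L, vol L * ρ₀ L := hmass
    _ ≤ (∑ L, vol L) * univ.sup' univ_nonempty ρ₀ :=
        sum_mul_le_sum_mul_sup' (fun L => (hvol L).le) ρ₀

end Mass

theorem stmt16_general {ι F : Type*} [Fintype ι] [Fintype F] [Nonempty ι] [DecidableEq ι]
    (Kof Lof : F → ι) (hKL : ∀ σ, Kof σ ≠ Lof σ) (flux : F → ℝ)
    (vol : ι → ℝ) (hvol : ∀ K, 0 < vol K) (δt lam : ℝ)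
    (ρn ρl : ι → ℝ)
    (hnn : ∀ K, 0 ≤ ρl K)
    (heq : ∀ K, ρl K - ρn K + lam * δt / vol K *
        ∑ σ, (if K = Kof σ then flux σ else if K = Lof σ then -flux σ else 0) = 0) :
    ∀ K, 0 ≤ ρl K ∧ ρl K ≤ (∑ L, vol L) *
      (Finset.univ.sup' Finset.univ_nonempty ρn) /
        (Finset.univ.inf' Finset.univ_nonempty vol) := by
  have hmass : ∑ K, vol K * ρl K = ∑ K, vol K * ρn K :=
    sum_mul_eq_of_sub_add_div_mul_eq_zero (fun K => (hvol K).ne')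
      (sum_netFlux_eq_zero hKL flux) heq
  exact fun K => ⟨hnn K, le_sum_mul_sup'_div_inf' hvol hnn hmass.le K⟩

/-- A priori bound in the topological degree argument: a nonnegative solution of
the homotopy equation with conservative fluxes is bounded by
|Ω| max_K ρ_K^n / min_K |K|. -/
theorem stmt16 {ι F : Type*} [Fintype ι] [Fintype F] [Nonempty ι] [DecidableEq ι]
    (Kof Lof : F → ι) (hKL : ∀ σ, Kof σ ≠ Lof σ) (flux : F → ℝ)
    (vol : ι → ℝ) (hvol : ∀ K, 0 < vol K) (δt lam : ℝ)
    (hlam : lam ∈ Set.Icc (0 : ℝ) 1) (ρn ρl : ι → ℝ)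
    (hρn : ∀ K, 0 < ρn K) (hnn : ∀ K, 0 ≤ ρl K)
    (heq : ∀ K, ρl K - ρn K + lam * δt / vol K *
        ∑ σ, (if K = Kof σ then flux σ else if K = Lof σ then -flux σ else 0) = 0) :
    ∀ K, 0 ≤ ρl K ∧ ρl K ≤ (∑ L, vol L) *
      (Finset.univ.sup' Finset.univ_nonempty ρn) /
        (Finset.univ.inf' Finset.univ_nonempty vol) :=
  stmt16_general Kof Lof hKL flux vol hvol δt lam ρn ρl hnn heq
end
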